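/- With (h̃_n) as defined by h̃_0 = 1, h̃_n = (1/|λ^n−1|) ∑_{m=2}^{n+1} |f_m| ∑_{n_1+⋯+n_m=n+1−m, n_i≥0} h̃_{n_1}⋯h̃_{n_m}, where |f_2| ≥ 1 and |λ|=1 with λ not a root of unity, one has h̃_{2s−1} ≥ h̃_{s−1}²/2 for all s ≥ 1, and consequently h̃_{is−1} ≥ h̃_{s−1}^i / 2 for all integers i ≥ 2 and s ≥ 1 (using monotonicity of (h̃_n)). -/
import Mathlib


open Finset


open Finset

/-- The recurrence defining the modified majorant sequence `h̃`:
`h̃₀ = 1`, `h̃_n = (1/|λ^n-1|) ∑_{m=2}^{n+1} |f_m| ∑_{n₁+⋯+n_m=n+1-m, nᵢ≥0} h̃_{n₁}⋯h̃_{n_m}`. -/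
def HtildeRec (lam : ℂ) (f : ℕ → ℂ) (h : ℕ → ℝ) : Prop :=
  h 0 = 1 ∧ ∀ n : ℕ, 1 ≤ n →
    h n = (1 / ‖lam ^ n - 1‖) * ∑ m ∈ Finset.Icc 2 (n + 1),
      ‖f m‖ * ∑ t ∈ Finset.Nat.antidiagonalTuple m (n + 1 - m), ∏ i, h (t i)

lemma htilde_nonneg (lam : ℂ) (f : ℕ → ℂ) (h : ℕ → ℝ) (hrec : HtildeRec lam f h) :
    ∀ n, 0 ≤ h n := by
  intro n
  induction n using Nat.strong_induction_on with
  | _ n ih =>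
    rcases Nat.eq_zero_or_pos n with rfl | hn
    · rw [hrec.1]; norm_num
    · rw [hrec.2 n hn]
      apply mul_nonneg (by positivity)
      apply Finset.sum_nonneg
      intro m hm
      apply mul_nonneg (norm_nonneg _)
      apply Finset.sum_nonneg
      intro t ht
      apply Finset.prod_nonneg
      intro i _
      apply ih
      rw [Finset.Nat.mem_antidiagonalTuple] at ht
      have hti : t i ≤ n + 1 - m := ht ▸ Finset.single_le_sum (fun _ _ => Nat.zero_le _)
        (Finset.mem_univ i)
      rw [Finset.mem_Icc] at hm
      omega

/-- Key lemma: if `a + b + 1 = n` then `h n ≥ (1/2) * ‖f 2‖ * (sum over antidiagonal pairs)`,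
specialized to give the products. -/
lemma htilde_key (lam : ℂ) (hlam_abs : ‖lam‖ = 1)
    (hlam_root : ∀ n : ℕ, 1 ≤ n → lam ^ n ≠ 1)
    (f : ℕ → ℂ) (hf2 : 1 ≤ ‖f 2‖)
    (h : ℕ → ℝ) (hrec : HtildeRec lam f h) (a b : ℕ) :
    h a * h b / 2 ≤ h (a + b + 1) ∧ (a ≠ b → h a * h b ≤ h (a + b + 1)) := by
  have hnn := htilde_nonneg lam f h hrec
  set n := a + b + 1 with hn
  have hn1 : 1 ≤ n := by omega
  -- the inner sum for m = 2
  set S : ℝ := ∑ t ∈ Finset.Nat.antidiagonalTuple 2 (n + 1 - 2), ∏ i, h (t i) with hS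
  have hSnonneg : ∀ t ∈ Finset.Nat.antidiagonalTuple 2 (n + 1 - 2), 0 ≤ ∏ i, h (t i) :=
    fun t _ => Finset.prod_nonneg fun i _ => hnn _
  have hmem : (![a, b] : Fin 2 → ℕ) ∈ Finset.Nat.antidiagonalTuple 2 (n + 1 - 2) := by
    rw [Finset.Nat.mem_antidiagonalTuple]
    simp only [Fin.sum_univ_two, Matrix.cons_val_zero, Matrix.cons_val_one, Matrix.head_cons]
    omega
  have hmem' : (![b, a] : Fin 2 → ℕ) ∈ Finset.Nat.antidiagonalTuple 2 (n + 1 - 2) := by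
    rw [Finset.Nat.mem_antidiagonalTuple]
    simp only [Fin.sum_univ_two, Matrix.cons_val_zero, Matrix.cons_val_one, Matrix.head_cons]
    omega
  have hprod : ∏ i, h ((![a, b] : Fin 2 → ℕ) i) = h a * h b := by
    simp [Fin.prod_univ_two]
  have hprod' : ∏ i, h ((![b, a] : Fin 2 → ℕ) i) = h b * h a := by
    simp [Fin.prod_univ_two]
  -- single term bound
  have hS1 : h a * h b ≤ S := by
    rw [hS, ← hprod]
    exact Finset.single_le_sum hSnonneg hmem
  -- two-term bound when a ≠ b
  have hS2 : a ≠ b → 2 * (h a * h b) ≤ S := by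
    intro hab
    have hne : (![a, b] : Fin 2 → ℕ) ≠ ![b, a] := by
      intro hEq
      exact hab (by simpa using congrFun hEq 0)
    calc 2 * (h a * h b)
        = ∑ t ∈ ({![a, b], ![b, a]} : Finset (Fin 2 → ℕ)), ∏ i, h (t i) := by
          rw [Finset.sum_pair hne, hprod, hprod']; ring
      _ ≤ S := by
          apply Finset.sum_le_sum_of_subset_of_nonneg
          · intro t ht
            simp only [Finset.mem_insert, Finset.mem_singleton] at ht
            rcases ht with rfl | rfl <;> assumption
          · intro t ht _; exact hSnonneg t ht
  -- outer sum ≥ m = 2 term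
  have hSnn : 0 ≤ S := Finset.sum_nonneg hSnonneg
  have houter : ‖f 2‖ * S ≤ ∑ m ∈ Finset.Icc 2 (n + 1),
      ‖f m‖ * ∑ t ∈ Finset.Nat.antidiagonalTuple m (n + 1 - m), ∏ i, h (t i) := by
    apply Finset.single_le_sum (f := fun m => ‖f m‖ *
      ∑ t ∈ Finset.Nat.antidiagonalTuple m (n + 1 - m), ∏ i, h (t i))
    · intro m _
      exact mul_nonneg (norm_nonneg _)
        (Finset.sum_nonneg fun t _ => Finset.prod_nonneg fun i _ => hnn _)
    · rw [Finset.mem_Icc]; omega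
  have hfS : S ≤ ‖f 2‖ * S := le_mul_of_one_le_left hSnn hf2
  -- the factor 1/‖λ^n - 1‖ ≥ 1/2
  have hden_pos : 0 < ‖lam ^ n - 1‖ := by
    rw [norm_pos_iff, sub_ne_zero]
    exact hlam_root n hn1
  have hden_le : ‖lam ^ n - 1‖ ≤ 2 := by
    calc ‖lam ^ n - 1‖ ≤ ‖lam ^ n‖ + ‖(1 : ℂ)‖ := norm_sub_le _ _
      _ = 2 := by rw [norm_pow, hlam_abs]; norm_num
  have hc : (1 : ℝ) / 2 ≤ 1 / ‖lam ^ n - 1‖ :=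
    one_div_le_one_div_of_le hden_pos hden_le
  have hmain : (1 : ℝ) / 2 * (‖f 2‖ * S) ≤ h n := by
    rw [hrec.2 n hn1]
    exact mul_le_mul hc houter (le_trans hSnn hfS) (by positivity)
  constructor
  · calc h a * h b / 2 = 1 / 2 * (h a * h b) := by ring
      _ ≤ 1 / 2 * (‖f 2‖ * S) := by
          apply mul_le_mul_of_nonneg_left (le_trans hS1 hfS) (by norm_num)
      _ ≤ h n := hmain
  · intro hab
    calc h a * h b = 1 / 2 * (2 * (h a * h b)) := by ring
      _ ≤ 1 / 2 * (‖f 2‖ * S) := by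
          apply mul_le_mul_of_nonneg_left (le_trans (hS2 hab) hfS) (by norm_num)
      _ ≤ h n := hmain

/-- `h̃_{2s-1} ≥ h̃_{s-1}²/2` for all `s ≥ 1`, and consequently
`h̃_{is-1} ≥ h̃_{s-1}^i/2` for all `i ≥ 2`, `s ≥ 1`. -/
theorem stmt14 (lam : ℂ) (hlam_abs : ‖lam‖ = 1)
    (hlam_root : ∀ n : ℕ, 1 ≤ n → lam ^ n ≠ 1)
    (f : ℕ → ℂ) (hf2 : 1 ≤ ‖f 2‖)
    (h : ℕ → ℝ) (hrec : HtildeRec lam f h) :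
    (∀ s : ℕ, 1 ≤ s → h (s - 1) ^ 2 / 2 ≤ h (2 * s - 1)) ∧
    (∀ i : ℕ, 2 ≤ i → ∀ s : ℕ, 1 ≤ s → h (s - 1) ^ i / 2 ≤ h (i * s - 1)) := by
  have hnn := htilde_nonneg lam f h hrec
  have key := htilde_key lam hlam_abs hlam_root f hf2 h hrec
  have part1 : ∀ s : ℕ, 1 ≤ s → h (s - 1) ^ 2 / 2 ≤ h (2 * s - 1) := by
    intro s hs
    have := (key (s - 1) (s - 1)).1
    have heq : (s - 1) + (s - 1) + 1 = 2 * s - 1 := by omega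
    rw [heq] at this
    calc h (s - 1) ^ 2 / 2 = h (s - 1) * h (s - 1) / 2 := by ring
      _ ≤ h (2 * s - 1) := this
  refine ⟨part1, ?_⟩
  intro i hi
  induction i with
  | zero => omega
  | succ i ih =>
    intro s hs
    rcases Nat.lt_or_ge i 2 with hi2 | hi2
    · -- i + 1 = 2
      have : i = 1 := by omega
      subst this
      have := part1 s hs
      calc h (s - 1) ^ 2 / 2 ≤ h (2 * s - 1) := this
        _ = h (2 * s - 1) := rfl
    · -- i ≥ 2 : h ((i+1)s - 1) ≥ h (is - 1) * h (s - 1) ≥ (h(s-1)^i/2) * h(s-1)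
      have hih := ih hi2 s hs
      have hne : i * s - 1 ≠ s - 1 := by
        have : 2 * s ≤ i * s := Nat.mul_le_mul_right s hi2
        omega
      have hkey := (key (i * s - 1) (s - 1)).2 hne
      have heq : (i * s - 1) + (s - 1) + 1 = (i + 1) * s - 1 := by
        have : 2 * s ≤ i * s := Nat.mul_le_mul_right s hi2
        have : s ≤ i * s := Nat.le_mul_of_pos_left s (by omega)
        cases s with
        | zero => omega
        | succ s' => ring_nf; omega
      rw [heq] at hkey
      calc h (s - 1) ^ (i + 1) / 2 = (h (s - 1) ^ i / 2) * h (s - 1) := by ring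
        _ ≤ h (i * s - 1) * h (s - 1) := by
            apply mul_le_mul_of_nonneg_right hih (hnn _)
        _ ≤ h ((i + 1) * s - 1) := hkey
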